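/- Let ρ₀ ∈ (0,1), C = {p ∈ ℝ² : ρ₀ ≤ ‖p‖ ≤ 1} and C* = {p ∈ ℝ² : ρ₀ ≤ ‖p‖ < 1}. Let (τ_k)_{k≥1} be positive reals with ∑_k τ_k < ∞ and let A ≥ 0. Let (f_k)_{k≥0} be maps from ℝ² to ℝ³, each continuously differentiable on a neighborhood of C, and let (g_k)_{k≥0} be continuous fields of symmetric bilinear forms on C such that g_k(p) converges to h(p) as k → ∞ for every p ∈ C*. Assume for every k ≥ 1 and every p ∈ C: (P1) ‖g_k(p) − (f_k*⟨,⟩)(p)‖ ≤ ‖g_{k+1}(p) − g_k(p)‖; (P2) ‖f_k(p) − f_{k−1}(p)‖ ≤ τ_k; (P3) ‖Df_k(p) − Df_{k−1}(p)‖ ≤ τ_k + A·‖g_k(p) − (f_{k−1}*⟨,⟩)(p)‖^{1/2}; and (P4) for every compact K ⊆ C*, ∑_k (sup_{p∈K} ‖g_k(p) − g_{k−1}(p)‖)^{1/2} < ∞. Then the sequence (f_k) converges uniformly on C to a continuous map f_∞, and on the open annulus {p : ρ₀ < ‖p‖ < 1} the map f_∞ is continuously differentiable and h-isometric: ⟨Df_∞(p)u,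 Df_∞(p)v⟩ = h(p)(u,v) for all u, v ∈ ℝ². -/

import Mathlib

open scoped RealInnerProductSpace

noncomputable section

abbrev E2 := EuclideanSpace ℝ (Fin 2)
abbrev E3 := EuclideanSpace ℝ (Fin 3)

/-- The norm `‖b‖ = sup_{v ≠ 0} |b(v,v)|/‖v‖²` of a symmetric bilinear form on `ℝ²`. -/
noncomputable def bnorm (b : E2 →ₗ[ℝ] E2 →ₗ[ℝ] ℝ) : ℝ :=
  ⨆ v : E2, |b v v| / ‖v‖ ^ 2

/-- The pullback metric `(f*⟨,⟩)(p)` of a map `f : ℝ² → ℝ³` at the point `p`,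
as a bilinear form on `ℝ²`. -/
noncomputable def pullbackForm (f : E2 → E3) (p : E2) : E2 →ₗ[ℝ] E2 →ₗ[ℝ] ℝ :=
  LinearMap.mk₂ ℝ (fun u v => ⟪fderiv ℝ f p u, fderiv ℝ f p v⟫)
    (fun u u' v => by simp [map_add, inner_add_left])
    (fun c u v => by simp [map_smul, real_inner_smul_left, Finset.mul_sum, mul_assoc])
    (fun u v v' => by simp [map_add, inner_add_right])
    (fun c u v => by simp [map_smul, real_inner_smul_right, Finset.mul_sum] <;> exact Finset.sum_congr rfl fun i _ => by ring)

/-! The increments `f (k + 1) - f k` are bounded on `C` by the summable `τ (k + 1)`, so `f k`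
converges uniformly on `C`. On a compact `K ⊆ C*`, (P1) and the triangle inequality bound
`‖g (k + 2) - (f (k + 1))*⟨,⟩‖` by twice the supremum over `K` of `‖g (k + 2) - g (k + 1)‖`, so
by (P3) the increments of the derivatives are dominated by a series that (P4) makes summable.
Hence the derivatives converge locally uniformly on the open annulus and the limit is `C¹`
there. Pointwise, (P1) and (P4) force `g k - (f k)*⟨,⟩ → 0`, so the pullback metric of the limit
is `lim g k = h`. -/

open Filter Set
open scoped Topology

section basisFun

variable {ι : Type*} [Fintype ι]

lemma apply_eq_sum_basisFun (b : EuclideanSpace ℝ ι →ₗ[ℝ] EuclideanSpace ℝ ι →ₗ[ℝ] ℝ)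
    (v w : EuclideanSpace ℝ ι) :
    b v w = ∑ i, ∑ j, v i * w j *
      b (EuclideanSpace.basisFun ι ℝ i) (EuclideanSpace.basisFun ι ℝ j) := by
  rw [← LinearMap.sum_repr_mul_repr_mul (B := b) (EuclideanSpace.basisFun ι ℝ).toBasis
    (EuclideanSpace.basisFun ι ℝ).toBasis v w]
  simp [Finsupp.sum_fintype, mul_assoc]

lemma abs_apply_le_sum_abs_basisFun (b : EuclideanSpace ℝ ι →ₗ[ℝ] EuclideanSpace ℝ ι →ₗ[ℝ] ℝ)
    (v : EuclideanSpace ℝ ι) :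
    |b v v| ≤ (∑ i, ∑ j,
      |b (EuclideanSpace.basisFun ι ℝ i) (EuclideanSpace.basisFun ι ℝ j)|) * ‖v‖ ^ 2 := by
  rw [apply_eq_sum_basisFun, Finset.sum_mul]
  refine (Finset.abs_sum_le_sum_abs _ _).trans (Finset.sum_le_sum fun i _ => ?_)
  rw [Finset.sum_mul]
  refine (Finset.abs_sum_le_sum_abs _ _).trans (Finset.sum_le_sum fun j _ => ?_)
  have hi : |v i| ≤ ‖v‖ := by simpa using PiLp.norm_apply_le v i
  have hj : |v j| ≤ ‖v‖ := by simpa using PiLp.norm_apply_le v j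
  rw [abs_mul, abs_mul, mul_comm, sq]
  gcongr

end basisFun

section bnorm

variable (b c : E2 →ₗ[ℝ] E2 →ₗ[ℝ] ℝ)

lemma bnorm_bddAbove : BddAbove (range fun v : E2 => |b v v| / ‖v‖ ^ 2) :=
  ⟨_, forall_mem_range.2 fun v =>
    div_le_of_le_mul₀ (sq_nonneg _) (by positivity) (abs_apply_le_sum_abs_basisFun b v)⟩

lemma abs_apply_le_bnorm (v : E2) : |b v v| ≤ bnorm b * ‖v‖ ^ 2 := by
  rcases eq_or_ne v 0 with rfl | hv
  · simp
  · rw [← div_le_iff₀ (by positivity)]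
    exact le_ciSup (bnorm_bddAbove b) v

lemma bnorm_nonneg : 0 ≤ bnorm b := by
  simpa [bnorm] using le_ciSup (bnorm_bddAbove b) 0

lemma bnorm_le {M : ℝ} (hM : 0 ≤ M) (h : ∀ v : E2, |b v v| ≤ M * ‖v‖ ^ 2) : bnorm b ≤ M :=
  ciSup_le fun v => div_le_of_le_mul₀ (sq_nonneg _) hM (h v)

lemma bnorm_le_sum_abs_basisFun :
    bnorm b ≤ ∑ i, ∑ j, |b (EuclideanSpace.basisFun _ ℝ i) (EuclideanSpace.basisFun _ ℝ j)| :=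
  bnorm_le b (by positivity) (abs_apply_le_sum_abs_basisFun b)

lemma bnorm_add_le : bnorm (b + c) ≤ bnorm b + bnorm c := by
  refine bnorm_le _ (add_nonneg (bnorm_nonneg b) (bnorm_nonneg c)) fun v => ?_
  calc |(b + c) v v| ≤ |b v v| + |c v v| := abs_add_le _ _
    _ ≤ bnorm b * ‖v‖ ^ 2 + bnorm c * ‖v‖ ^ 2 :=
        add_le_add (abs_apply_le_bnorm b v) (abs_apply_le_bnorm c v)
    _ = (bnorm b + bnorm c) * ‖v‖ ^ 2 := by ring

lemma abs_apply_le_bnorm_of_symm (hb : ∀ u v, b u v = b v u) (u v : E2) :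
    |b u v| ≤ bnorm b * ((‖u‖ ^ 2 + ‖v‖ ^ 2) / 2) := by
  have hpol : 4 * b u v = b (u + v) (u + v) - b (u - v) (u - v) := by
    simp only [map_add, map_sub, LinearMap.add_apply, LinearMap.sub_apply, hb v u]
    ring
  have hpar : ‖u + v‖ ^ 2 + ‖u - v‖ ^ 2 = 2 * (‖u‖ ^ 2 + ‖v‖ ^ 2) := by
    simpa [sq] using parallelogram_law_with_norm ℝ u v
  have h4 : 4 * |b u v| ≤ bnorm b * (2 * (‖u‖ ^ 2 + ‖v‖ ^ 2)) :=
    calc 4 * |b u v| = |b (u + v) (u + v) - b (u - v) (u - v)| := by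
          rw [← hpol, abs_mul, abs_of_pos (four_pos : (0 : ℝ) < 4)]
      _ ≤ |b (u + v) (u + v)| + |b (u - v) (u - v)| := abs_sub _ _
      _ ≤ bnorm b * ‖u + v‖ ^ 2 + bnorm b * ‖u - v‖ ^ 2 :=
          add_le_add (abs_apply_le_bnorm b _) (abs_apply_le_bnorm b _)
      _ = bnorm b * (2 * (‖u‖ ^ 2 + ‖v‖ ^ 2)) := by rw [← hpar]; ring
  linarith

lemma bddAbove_range_bnorm {K : Set E2} (hK : IsCompact K) {b : E2 → E2 →ₗ[ℝ] E2 →ₗ[ℝ] ℝ}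
    (hb : ∀ u v, ContinuousOn (fun p => b p u v) K) :
    BddAbove (range fun p : K => bnorm (b p)) := by
  obtain ⟨M, hM⟩ := hK.bddAbove_image (continuousOn_finsetSum _ fun i _ =>
    continuousOn_finsetSum _ fun j _ => (hb _ _).abs)
  exact ⟨M, forall_mem_range.2 fun p =>
    (bnorm_le_sum_abs_basisFun _).trans (hM (mem_image_of_mem _ p.2))⟩

end bnorm

lemma pullbackForm_comm (f : E2 → E3) (p u v : E2) :
    pullbackForm f p u v = pullbackForm f p v u :=
  real_inner_comm (fderiv ℝ f p v) _

lemma tendstoUniformlyOn_of_norm_sub_le {α F : Type*} [NormedAddCommGroup F] [CompleteSpace F]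
    {f : ℕ → α → F} {s : Set α} {u : ℕ → ℝ} (hu : Summable u)
    (hf : ∀ k, ∀ x ∈ s, ‖f (k + 1) x - f k x‖ ≤ u k) :
    TendstoUniformlyOn f (fun x => f 0 x + ∑' k, (f (k + 1) x - f k x)) atTop s := by
  have hsum := tendstoUniformlyOn_tsum_nat hu hf
  rw [Metric.tendstoUniformlyOn_iff] at hsum ⊢
  intro ε hε
  filter_upwards [hsum ε hε] with N hN x hx
  have htel : f N x = f 0 x + ∑ k ∈ Finset.range N, (f (k + 1) x - f k x) := by
    rw [Finset.sum_range_sub (fun k => f k x)]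
    abel
  rw [htel, dist_add_left]
  exact hN x hx

lemma contDiffOn_one_and_eqOn_fderiv_of_tendstoLocallyUniformlyOn {E F : Type*}
    [NormedAddCommGroup E] [NormedSpace ℝ E] [NormedAddCommGroup F] [NormedSpace ℝ F]
    {f : ℕ → E → F} {φ : E → F} {G : E → E →L[ℝ] F} {U : Set E} (hU : IsOpen U)
    (hf : ∀ n, ContDiffOn ℝ 1 (f n) U) (hφ : ∀ x ∈ U, Tendsto (fun n => f n x) atTop (𝓝 (φ x)))
    (hG : TendstoLocallyUniformlyOn (fun n => fderiv ℝ (f n)) G atTop U) :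
    ContDiffOn ℝ 1 φ U ∧ EqOn (fderiv ℝ φ) G U := by
  have hφG : ∀ x ∈ U, HasFDerivAt φ (G x) x := fun x hx =>
    hasFDerivAt_of_tendstoLocallyUniformlyOn hU hG
      (fun n y hy => (((hf n).differentiableOn one_ne_zero y hy).differentiableAt
        (hU.mem_nhds hy)).hasFDerivAt) hφ hx
  have hderiv : EqOn (fderiv ℝ φ) G U := fun x hx => (hφG x hx).fderiv
  refine ⟨?_, hderiv⟩
  rw [show (1 : WithTop ℕ∞) = 0 + 1 by norm_num, contDiffOn_succ_iff_fderiv_of_isOpen hU,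
    contDiffOn_zero]
  refine ⟨fun x hx => (hφG x hx).differentiableAt.differentiableWithinAt, by simp, ?_⟩
  refine (hG.continuousOn (Eventually.of_forall fun n => ?_).frequently).congr hderiv
  exact (hf n).continuousOn_fderiv_of_isOpen hU le_rfl

/-- The sequence starts at `f 1`: the first increment of the derivatives is governed by
`g 1 - (f 0)*⟨,⟩`, which (P1) does not control. -/
lemma tendstoUniformlyOn_fderiv_of_summable_sqrt {K : Set E2} (hK : IsCompact K) {τ : ℕ → ℝ}
    (hτ : Summable τ) {A : ℝ} (hA : 0 ≤ A) {f : ℕ → E2 → E3}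
    {g : ℕ → E2 → E2 →ₗ[ℝ] E2 →ₗ[ℝ] ℝ} (hg : ∀ k u v, ContinuousOn (fun p => g k p u v) K)
    (hP1 : ∀ k, ∀ p ∈ K,
      bnorm (g (k + 1) p - pullbackForm (f (k + 1)) p) ≤ bnorm (g (k + 2) p - g (k + 1) p))
    (hP3 : ∀ k, ∀ p ∈ K, ‖fderiv ℝ (f (k + 1)) p - fderiv ℝ (f k) p‖
      ≤ τ (k + 1) + A * √(bnorm (g (k + 1) p - pullbackForm (f k) p)))
    (hP4 : Summable fun k => √(⨆ p : K, bnorm (g (k + 1) p - g k p))) :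
    TendstoUniformlyOn (fun n => fderiv ℝ (f (n + 1)))
      (fun p => fderiv ℝ (f 1) p + ∑' k, (fderiv ℝ (f (k + 2)) p - fderiv ℝ (f (k + 1)) p))
      atTop K := by
  set σ : ℕ → ℝ := fun k => ⨆ p : K, bnorm (g (k + 1) p - g k p)
  have hσ : ∀ k, ∀ p ∈ K, bnorm (g (k + 1) p - g k p) ≤ σ k := fun k p hp =>
    le_ciSup (bddAbove_range_bnorm hK (b := fun p => g (k + 1) p - g k p) fun u v =>
      ((hg (k + 1) u v).sub (hg k u v)).congr fun _ _ => by simp) ⟨p, hp⟩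
  refine tendstoUniformlyOn_of_norm_sub_le (u := fun k => τ (k + 2) + A * √2 * √(σ (k + 1)))
    (((summable_nat_add_iff 2).2 hτ).add (((summable_nat_add_iff 1).2 hP4).mul_left _))
    fun k p hp => ?_
  have htri : bnorm (g (k + 2) p - pullbackForm (f (k + 1)) p) ≤ 2 * σ (k + 1) :=
    calc bnorm (g (k + 2) p - pullbackForm (f (k + 1)) p)
        = bnorm ((g (k + 2) p - g (k + 1) p) + (g (k + 1) p - pullbackForm (f (k + 1)) p)) := by
          congr 1; abel
      _ ≤ σ (k + 1) + σ (k + 1) :=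
          (bnorm_add_le _ _).trans (add_le_add (hσ _ p hp) ((hP1 k p hp).trans (hσ _ p hp)))
      _ = 2 * σ (k + 1) := by ring
  calc ‖fderiv ℝ (f (k + 2)) p - fderiv ℝ (f (k + 1)) p‖
      ≤ τ (k + 2) + A * √(bnorm (g (k + 2) p - pullbackForm (f (k + 1)) p)) := hP3 (k + 1) p hp
    _ ≤ τ (k + 2) + A * √(2 * σ (k + 1)) := by gcongr
    _ = τ (k + 2) + A * √2 * √(σ (k + 1)) := by rw [Real.sqrt_mul zero_le_two]; ring

lemma tendsto_bnorm_sub_pullbackForm {f : ℕ → E2 → E3} {p : E2}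
    {g : ℕ → E2 →ₗ[ℝ] E2 →ₗ[ℝ] ℝ}
    (hP1 : ∀ k, bnorm (g (k + 1) - pullbackForm (f (k + 1)) p) ≤ bnorm (g (k + 2) - g (k + 1)))
    (hP4 : Summable fun k => √(bnorm (g (k + 1) - g k))) :
    Tendsto (fun n => bnorm (g (n + 1) - pullbackForm (f (n + 1)) p)) atTop (𝓝 0) := by
  have h0 : Tendsto (fun k => bnorm (g (k + 1) - g k)) atTop (𝓝 0) := by
    simpa [Real.sq_sqrt (bnorm_nonneg _)] using hP4.tendsto_atTop_zero.pow 2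
  exact squeeze_zero (fun n => bnorm_nonneg _) hP1 (h0.comp (tendsto_add_atTop_nat 1))

lemma inner_apply_eq_of_tendsto_fderiv {f : ℕ → E2 → E3} {p : E2} {L : E2 →L[ℝ] E3}
    (hL : Tendsto (fun n => fderiv ℝ (f n) p) atTop (𝓝 L)) {b : ℕ → E2 →ₗ[ℝ] E2 →ₗ[ℝ] ℝ}
    (hsymm : ∀ n u v, b n u v = b n v u)
    (hb : Tendsto (fun n => bnorm (b n - pullbackForm (f n) p)) atTop (𝓝 0))
    {u v : E2} {c : ℝ} (hc : Tendsto (fun n => b n u v) atTop (𝓝 c)) :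
    ⟪L u, L v⟫ = c := by
  have happly : ∀ w, Tendsto (fun n => fderiv ℝ (f n) p w) atTop (𝓝 (L w)) := fun w =>
    ((ContinuousLinearMap.apply ℝ E3 w).continuous.tendsto L).comp hL
  have hpb : Tendsto (fun n => pullbackForm (f n) p u v) atTop (𝓝 ⟪L u, L v⟫) :=
    (happly u).inner (happly v)
  have hdiff : Tendsto (fun n => b n u v - pullbackForm (f n) p u v) atTop (𝓝 0) := by
    refine squeeze_zero_norm (fun n => ?_) (by simpa using hb.mul_const ((‖u‖ ^ 2 + ‖v‖ ^ 2) / 2))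
    refine abs_apply_le_bnorm_of_symm (b n - pullbackForm (f n) p) (fun u' v' => ?_) u v
    simp only [LinearMap.sub_apply, hsymm n u', pullbackForm_comm (f n) p u']
  exact tendsto_nhds_unique hpb (by simpa using hc.sub hdiff)

theorem stmt1 (ρ₀ : ℝ)
    (C Cstar : Set E2)
    (hC : C = {p : E2 | ρ₀ ≤ ‖p‖ ∧ ‖p‖ ≤ 1})
    (hCstar : Cstar = {p : E2 | ρ₀ ≤ ‖p‖ ∧ ‖p‖ < 1})
    (τ : ℕ → ℝ) (hτsum : Summable τ)
    (A : ℝ) (hA : 0 ≤ A)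
    (f : ℕ → E2 → E3)
    (hfC1 : ∀ k, ∃ U : Set E2, IsOpen U ∧ C ⊆ U ∧ ContDiffOn ℝ 1 (f k) U)
    (g : ℕ → E2 → (E2 →ₗ[ℝ] E2 →ₗ[ℝ] ℝ))
    (hgsymm : ∀ k, ∀ p ∈ C, ∀ u v : E2, g k p u v = g k p v u)
    (hgcont : ∀ k, ∀ u v : E2, ContinuousOn (fun p => g k p u v) C)
    (hgconv : ∀ p ∈ Cstar, ∀ u v : E2,
      Filter.Tendsto (fun k => g k p u v) Filter.atTop
        (nhds (4 * ⟪u, v⟫ / (1 - ‖p‖ ^ 2) ^ 2)))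
    -- (P1)
    (hP1 : ∀ k : ℕ, ∀ p ∈ C,
      bnorm (g (k + 1) p - pullbackForm (f (k + 1)) p) ≤ bnorm (g (k + 2) p - g (k + 1) p))
    -- (P2)
    (hP2 : ∀ k : ℕ, ∀ p ∈ C, ‖f (k + 1) p - f k p‖ ≤ τ (k + 1))
    -- (P3)
    (hP3 : ∀ k : ℕ, ∀ p ∈ C,
      ‖fderiv ℝ (f (k + 1)) p - fderiv ℝ (f k) p‖
        ≤ τ (k + 1) + A * Real.sqrt (bnorm (g (k + 1) p - pullbackForm (f k) p)))
    -- (P4)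
    (hP4 : ∀ K : Set E2, K ⊆ Cstar → IsCompact K →
      Summable (fun k : ℕ => Real.sqrt (⨆ p : K, bnorm (g (k + 1) (p : E2) - g k (p : E2))))) :
    ∃ flim : E2 → E3,
      TendstoUniformlyOn f flim Filter.atTop C ∧
      ContinuousOn flim C ∧
      ContDiffOn ℝ 1 flim {p : E2 | ρ₀ < ‖p‖ ∧ ‖p‖ < 1} ∧
      ∀ p : E2, ρ₀ < ‖p‖ → ‖p‖ < 1 → ∀ u v : E2,
        ⟪fderiv ℝ flim p u, fderiv ℝ flim p v⟫ = 4 * ⟪u, v⟫ / (1 - ‖p‖ ^ 2) ^ 2 := by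
  set Ω : Set E2 := {p | ρ₀ < ‖p‖ ∧ ‖p‖ < 1}
  have hΩ : IsOpen Ω :=
    (isOpen_lt continuous_const continuous_norm).inter (isOpen_lt continuous_norm continuous_const)
  have hΩCstar : Ω ⊆ Cstar := by rw [hCstar]; exact fun p hp => ⟨hp.1.le, hp.2⟩
  have hΩC : Ω ⊆ C := by rw [hC]; exact fun p hp => ⟨hp.1.le, hp.2.le⟩
  have hf : ∀ k, ContDiffOn ℝ 1 (f k) C := fun k =>
    let ⟨_, _, hCU, hU⟩ := hfC1 k; hU.mono hCU
  have hF := tendstoUniformlyOn_of_norm_sub_le ((summable_nat_add_iff 1).2 hτsum) hP2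
  have hG := (tendstoLocallyUniformlyOn_iff_forall_isCompact hΩ).2 fun K hKΩ hK =>
    tendstoUniformlyOn_fderiv_of_summable_sqrt hK hτsum hA
      (fun k u v => (hgcont k u v).mono (hKΩ.trans hΩC)) (fun k p hp => hP1 k p (hΩC (hKΩ hp)))
      (fun k p hp => hP3 k p (hΩC (hKΩ hp))) (hP4 K (hKΩ.trans hΩCstar) hK)
  obtain ⟨hC1, hderiv⟩ := contDiffOn_one_and_eqOn_fderiv_of_tendstoLocallyUniformlyOn hΩ
    (fun n => (hf (n + 1)).mono hΩC)
    (fun p hp => (hF.tendsto_at (hΩC hp)).comp (tendsto_add_atTop_nat 1)) hG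
  refine ⟨_, hF, hF.continuousOn (Eventually.of_forall fun n => (hf n).continuousOn).frequently,
    hC1, fun p hp1 hp2 u v => ?_⟩
  have hp : p ∈ Ω := ⟨hp1, hp2⟩
  rw [hderiv hp]
  refine inner_apply_eq_of_tendsto_fderiv (f := fun n => f (n + 1)) (b := fun n => g (n + 1) p)
    (hG.tendsto_at hp) (fun n => hgsymm (n + 1) p (hΩC hp))
    (tendsto_bnorm_sub_pullbackForm (g := fun k => g k p) (fun k => hP1 k p (hΩC hp)) ?_)
    ((hgconv p (hΩCstar hp) u v).comp (tendsto_add_atTop_nat 1))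
  simpa using hP4 {p} (singleton_subset_iff.2 (hΩCstar hp)) isCompact_singleton
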